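/- Let Q ∈ ℝ^{3×3} be orthogonal (QᵀQ = I), let t ∈ ℝ³, and let F' = [f_1 + t,…,f_n + t]. Consider a q-layer EGNN, EGNN(A, F, L) = EGNN_q ∘ ⋯ ∘ EGNN_1(φ_in(A), F, L), where each layer EGNN_ℓ uses arbitrary functions φ_msg^ℓ : ℝ^d × ℝ^d × ℝ^{3×3} × ℝ^{3×k} → ℝ^d and φ_upd^ℓ : ℝ^d × ℝ^d → ℝ^d, and φ_in : ℝ^{h×n} → ℝ^{d×n} is an arbitrary input map. Then the full EGNN is invariant under the joint action of orthogonal transformations on the lattice and common translations of fractional coordinates: EGNN(A, F', Q·L) = EGNN(A, F, L) for all A ∈ ℝ^{h×n}, F ∈ ℝ^{3×n}, L ∈ ℝ^{3×3}. -/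
import Mathlib


/-- The `k`-order Fourier transform of relative fractional coordinates:
entry `(i, j)` (with `j ∈ [k]` represented by `j.1 + 1`) is `sin (π j x_i)` when `j`
is even and `cos (π j x_i)` when `j` is odd. -/
noncomputable def psiFT (k : ℕ) (x : Fin 3 → ℝ) : Fin 3 → Fin k → ℝ :=
  fun i j =>
    if (j.1 + 1) % 2 = 0 then Real.sin (Real.pi * ((j.1 + 1 : ℕ) : ℝ) * x i)
    else Real.cos (Real.pi * ((j.1 + 1 : ℕ) : ℝ) * x i)

/-- The pairwise message between atoms `i` and `j`:
`MSG_{i,j}(F, L, H) = φ_msg (h_i, h_j, LᵀL, ψ_{FT,k}(f_i − f_j))`. -/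
noncomputable def MSG {n d k : ℕ}
    (φmsg : (Fin d → ℝ) → (Fin d → ℝ) → Matrix (Fin 3) (Fin 3) ℝ →
      (Fin 3 → Fin k → ℝ) → (Fin d → ℝ))
    (F : Fin n → Fin 3 → ℝ) (L : Matrix (Fin 3) (Fin 3) ℝ)
    (H : Fin n → Fin d → ℝ) (i j : Fin n) : Fin d → ℝ :=
  φmsg (H i) (H j) (L.transpose * L) (psiFT k (F i - F j))

/-- One EGNN layer: `y_i = h_i + φ_upd (h_i, Σ_{j=1}^n MSG_{i,j}(F, L, H))`. -/
noncomputable def EGNNlayer {n d k : ℕ}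
    (φmsg : (Fin d → ℝ) → (Fin d → ℝ) → Matrix (Fin 3) (Fin 3) ℝ →
      (Fin 3 → Fin k → ℝ) → (Fin d → ℝ))
    (φupd : (Fin d → ℝ) → (Fin d → ℝ) → (Fin d → ℝ))
    (F : Fin n → Fin 3 → ℝ) (L : Matrix (Fin 3) (Fin 3) ℝ)
    (H : Fin n → Fin d → ℝ) : Fin n → Fin d → ℝ :=
  fun i => H i + φupd (H i) (∑ j : Fin n, MSG φmsg F L H i j)

/-- A stack of EGNN layers (given as a list of `(φ_msg, φ_upd)` pairs), applied in
order to the hidden state, with `F` and `L` held fixed. -/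
noncomputable def EGNNstack {n d k : ℕ}
    (layers : List
      (((Fin d → ℝ) → (Fin d → ℝ) → Matrix (Fin 3) (Fin 3) ℝ →
          (Fin 3 → Fin k → ℝ) → (Fin d → ℝ)) ×
        ((Fin d → ℝ) → (Fin d → ℝ) → (Fin d → ℝ))))
    (F : Fin n → Fin 3 → ℝ) (L : Matrix (Fin 3) (Fin 3) ℝ)
    (H : Fin n → Fin d → ℝ) : Fin n → Fin d → ℝ :=
  match layers with
  | [] => H
  | l :: rest => EGNNstack rest F L (EGNNlayer l.1 l.2 F L H)

theorem EGNNstack_invariant_aux {n d k : ℕ}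
    (layers : List
      (((Fin d → ℝ) → (Fin d → ℝ) → Matrix (Fin 3) (Fin 3) ℝ →
          (Fin 3 → Fin k → ℝ) → (Fin d → ℝ)) ×
        ((Fin d → ℝ) → (Fin d → ℝ) → (Fin d → ℝ))))
    (Q : Matrix (Fin 3) (Fin 3) ℝ) (hQ : Q.transpose * Q = 1)
    (t : Fin 3 → ℝ) (F : Fin n → Fin 3 → ℝ) (L : Matrix (Fin 3) (Fin 3) ℝ)
    (H : Fin n → Fin d → ℝ) :
    EGNNstack layers (fun i => F i + t) (Q * L) H = EGNNstack layers F L H := by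
  have hL : ((Q * L).transpose * (Q * L)) = L.transpose * L := by
    rw [Matrix.transpose_mul, Matrix.mul_assoc, ← Matrix.mul_assoc Q.transpose, hQ,
      Matrix.one_mul]
  induction layers generalizing H with
  | nil => rfl
  | cons l rest ih =>
    simp only [EGNNstack]
    have hlayer : EGNNlayer l.1 l.2 (fun i => F i + t) (Q * L) H =
        EGNNlayer l.1 l.2 F L H := by
      funext i
      have hF : ∀ j : Fin n, (F i + t) - (F j + t) = F i - F j := by
        intro j; abel
      simp only [EGNNlayer, MSG, hL, hF]
    rw [hlayer]; exact ih _

/-- A `q`-layer EGNN, `EGNN(A, F, L) = EGNN_q ∘ ⋯ ∘ EGNN_1(φ_in(A), F, L)`,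
is invariant under the joint action of an orthogonal transformation `Q` on the lattice
and a common translation `t` of the fractional coordinates:
`EGNN(A, F', Q·L) = EGNN(A, F, L)` for all `A`, `F`, `L`, where `F' = [f_1 + t, …, f_n + t]`. -/
theorem EGNN_invariant {n d k hdim : ℕ} (hk : 0 < k) (hkeven : Even k)
    (q : ℕ)
    (layers : List
      (((Fin d → ℝ) → (Fin d → ℝ) → Matrix (Fin 3) (Fin 3) ℝ →
          (Fin 3 → Fin k → ℝ) → (Fin d → ℝ)) ×
        ((Fin d → ℝ) → (Fin d → ℝ) → (Fin d → ℝ))))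
    (hq : layers.length = q)
    (φin : (Fin n → Fin hdim → ℝ) → (Fin n → Fin d → ℝ))
    (Q : Matrix (Fin 3) (Fin 3) ℝ) (hQ : Q.transpose * Q = 1)
    (t : Fin 3 → ℝ) :
    ∀ (A : Fin n → Fin hdim → ℝ) (F : Fin n → Fin 3 → ℝ)
      (L : Matrix (Fin 3) (Fin 3) ℝ),
      EGNNstack layers (fun i => F i + t) (Q * L) (φin A) =
        EGNNstack layers F L (φin A) := by
  intro A F L
  exact EGNNstack_invariant_aux layers Q hQ t F L (φin A)
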